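/- Let G = (Q, T) be a D-VASS and let k ∈ {1, …, D} be an index that is not orthogonal to G, i.e., some simple cycle o of G has Δ(o)(k) ≠ 0. Let U ∈ ℕ and let G^{-k} be the D-VASS whose states are the pairs (p, c) with p ∈ Q and 0 ≤ c ≤ U, and whose transitions are (p, c) →^t (q, c + t(k)) for every transition p →^t q of G and every c with 0 ≤ c ≤ U and 0 ≤ c + t(k) ≤ U. Then dim_ℚ V_{G^{-k}} < dim_ℚ V_G. -/

import Mathlib

/-- An edge (transition) of a `D`-dimensional VASS over state space `Q`:
source state, displacement label in `ℤ^D`, target state. -/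
abbrev Edge (D : ℕ) (Q : Type) := Q × (Fin D → ℤ) × Q

/-- A `D`-dimensional vector addition system with states over state space `Q`. -/
structure VASS (D : ℕ) (Q : Type) where
  T : Finset (Edge D Q)

/-- `IsPath G p q π` : `π` is a sequence of consecutive transitions of `G` from `p` to `q`. -/
def IsPath {D : ℕ} {Q : Type} (G : VASS D Q) : Q → Q → List (Edge D Q) → Prop
  | p, q, [] => p = q
  | p, q, e :: π => e ∈ G.T ∧ e.1 = p ∧ IsPath G e.2.2 q π

/-- The displacement of a path: the sum of its labels. -/
def disp {D : ℕ} {Q : Type} (π : List (Edge D Q)) : Fin D → ℤ :=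
  fun i => (π.map fun e => e.2.1 i).sum

/-- A simple cycle: a nonempty circular path in which no vertex occurs more than once. -/
def IsSimpleCycle {D : ℕ} {Q : Type} (G : VASS D Q) (p : Q) (π : List (Edge D Q)) : Prop :=
  π ≠ [] ∧ IsPath G p p π ∧ (π.map fun e => e.1).Nodup

/-- `V_G`: the `ℚ`-linear span of the displacements of the simple cycles of `G`. -/
noncomputable def spanV {D : ℕ} {Q : Type} (G : VASS D Q) : Submodule ℚ (Fin D → ℚ) :=
  Submodule.span ℚ {v | ∃ p π, IsSimpleCycle G p π ∧ v = fun i => ((disp π i : ℤ) : ℚ)}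

/-- The VASS `G^{-k}`: the value of the `k`-th coordinate, kept in the interval `[0, U]`,
is built into the states. States are pairs `(p, c)` with `p ∈ Q` and `0 ≤ c ≤ U`;
transitions are `(p, c) →ᵗ (q, c + t k)` for every transition `p →ᵗ q` of `G` whenever
both `c` and `c + t k` lie in `[0, U]`. -/
noncomputable def reduce {D : ℕ} {Q : Type} [DecidableEq Q] (G : VASS D Q) (k : Fin D) (U : ℕ) :
    VASS D (Q × ℤ) where
  T := (((Finset.Icc (0 : ℤ) (U : ℤ)) ×ˢ G.T).filter
        (fun x => 0 ≤ x.1 + x.2.2.1 k ∧ x.1 + x.2.2.1 k ≤ (U : ℤ))).image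
        (fun x => ((x.2.1, x.1), x.2.2.1, (x.2.2.2, x.1 + x.2.2.1 k)))

-- aux lemmas
variable {D : ℕ} {Q : Type}

lemma isPath_append {G : VASS D Q} {p q r : Q} {A B : List (Edge D Q)}
    (hA : IsPath G p q A) (hB : IsPath G q r B) : IsPath G p r (A ++ B) := by
  induction A generalizing p with
  | nil => cases hA; exact hB
  | cons e t ih => exact ⟨hA.1, hA.2.1, ih hA.2.2⟩

lemma isPath_append_split {G : VASS D Q} {p r : Q} {A B : List (Edge D Q)}
    (h : IsPath G p r (A ++ B)) : ∃ q, IsPath G p q A ∧ IsPath G q r B := by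
  induction A generalizing p with
  | nil => exact ⟨p, rfl, h⟩
  | cons e t ih =>
    obtain ⟨q, h1, h2⟩ := ih h.2.2
    exact ⟨q, ⟨h.1, h.2.1, h1⟩, h2⟩

lemma disp_append (A B : List (Edge D Q)) (i : Fin D) :
    disp (A ++ B) i = disp A i + disp B i := by
  simp [disp]

lemma exists_dup_split {α : Type*} : ∀ (l : List α), ¬ l.Nodup →
    ∃ l₁ x l₂ l₃, l = l₁ ++ x :: l₂ ++ x :: l₃ := by
  intro l
  induction l with
  | nil => intro h; exact absurd List.nodup_nil h
  | cons a t ih =>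
    intro h
    by_cases ha : a ∈ t
    · obtain ⟨l₂, l₃, rfl⟩ := List.append_of_mem ha
      exact ⟨[], a, l₂, l₃, rfl⟩
    · have : ¬ t.Nodup := fun hn => h (List.nodup_cons.2 ⟨ha, hn⟩)
      obtain ⟨l₁, x, l₂, l₃, rfl⟩ := ih this
      exact ⟨a :: l₁, x, l₂, l₃, rfl⟩

lemma map_eq_append_split {α β : Type*} {f : α → β} :
    ∀ {l : List α} {s t : List β}, l.map f = s ++ t →
    ∃ a b, l = a ++ b ∧ a.map f = s ∧ b.map f = t := by
  intro l s
  induction s generalizing l with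
  | nil => intro t h; exact ⟨[], l, rfl, rfl, h⟩
  | cons x s ih =>
    intro t h
    cases l with
    | nil => simp at h
    | cons e l =>
      simp only [List.map_cons, List.cons_append, List.cons.injEq] at h
      obtain ⟨a, b, rfl, ha, hb⟩ := ih h.2
      exact ⟨e :: a, b, rfl, by simp [h.1, ha], hb⟩

lemma cycle_mem {G : VASS D Q} : ∀ (n : ℕ) (π : List (Edge D Q)) (p : Q),
    π.length = n → IsPath G p p π →
    (fun i => ((disp π i : ℤ) : ℚ)) ∈ spanV G := by
  intro n
  induction n using Nat.strong_induction_on with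
  | _ n ih =>
    intro π p hlen hpath
    by_cases hnil : π = []
    · subst hnil
      have h0 : (fun i => ((disp ([] : List (Edge D Q)) i : ℤ) : ℚ)) = 0 := by
        funext i; simp [disp]
      rw [h0]; exact (spanV G).zero_mem
    by_cases hnd : (π.map fun e => e.1).Nodup
    · exact Submodule.subset_span ⟨p, π, ⟨hnil, hpath, hnd⟩, rfl⟩
    obtain ⟨l₁, x, l₂, l₃, hs⟩ := exists_dup_split _ hnd
    rw [show l₁ ++ x :: l₂ ++ x :: l₃ = l₁ ++ ((x :: l₂) ++ x :: l₃) by simp] at hs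
    obtain ⟨A, rest1, rfl, hA, hrest1⟩ := map_eq_append_split hs
    obtain ⟨B, rest2, rfl, hB, hrest2⟩ := map_eq_append_split hrest1
    rcases B with _ | ⟨e₁, M⟩; · simp at hB
    rcases rest2 with _ | ⟨e₂, C⟩; · simp at hrest2
    simp only [List.map_cons, List.cons.injEq] at hB hrest2
    obtain ⟨q1, hpA, hp1⟩ := isPath_append_split hpath
    obtain ⟨q2, hpB, hpC⟩ := isPath_append_split hp1
    have hq1 : q1 = x := by rcases hpB with ⟨_, h2, _⟩; rw [← h2, hB.1]
    have hq2 : q2 = x := by rcases hpC with ⟨_, h2, _⟩; rw [← h2, hrest2.1]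
    have hq : q1 = q2 := hq1.trans hq2.symm
    subst hq
    have hcyc1 : IsPath G p p (A ++ e₂ :: C) := isPath_append hpA hpC
    have hcyc2 := hpB
    have hlt1 : (A ++ e₂ :: C).length < n := by subst hlen; simp
    have hlt2 : (e₁ :: M).length < n := by subst hlen; simp; omega
    have m1 := ih _ hlt1 _ _ rfl hcyc1
    have m2 := ih _ hlt2 _ _ rfl hcyc2
    have key : (fun i => ((disp (A ++ (e₁ :: M ++ e₂ :: C)) i : ℤ) : ℚ)) =
        (fun i => ((disp (A ++ e₂ :: C) i : ℤ) : ℚ)) +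
        (fun i => ((disp (e₁ :: M) i : ℤ) : ℚ)) := by
      funext i
      simp only [Pi.add_apply, disp, List.map_append, List.map_cons, List.sum_append,
        List.sum_cons]
      push_cast
      ring
    rw [key]
    exact (spanV G).add_mem m1 m2

-- projection lemmas
def proj {D : ℕ} {Q : Type} (e : Edge D (Q × ℤ)) : Edge D Q := (e.1.1, e.2.1, e.2.2.1)

lemma reduce_edge {G : VASS D Q} [DecidableEq Q] {k : Fin D} {U : ℕ}
    {e : Edge D (Q × ℤ)} (he : e ∈ (reduce G k U).T) :
    proj e ∈ G.T ∧ e.2.2.2 = e.1.2 + e.2.1 k := by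
  simp only [reduce, Finset.mem_image, Finset.mem_filter, Finset.mem_product] at he
  obtain ⟨x, ⟨⟨_, hx⟩, _⟩, rfl⟩ := he
  exact ⟨hx, rfl⟩

lemma reduce_path {G : VASS D Q} [DecidableEq Q] {k : Fin D} {U : ℕ} :
    ∀ (π : List (Edge D (Q × ℤ))) (s t : Q × ℤ), IsPath (reduce G k U) s t π →
    IsPath G s.1 t.1 (π.map proj) ∧ t.2 = s.2 + disp π k := by
  intro π
  induction π with
  | nil =>
    intro s t h
    cases h
    exact ⟨rfl, by simp [disp]⟩
  | cons e rest ih =>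
    intro s t h
    obtain ⟨he, hsrc, hrest⟩ := h
    obtain ⟨hmem, htgt⟩ := reduce_edge he
    obtain ⟨hp, hd⟩ := ih e.2.2 t hrest
    constructor
    · exact ⟨hmem, by rw [← hsrc]; rfl, hp⟩
    · rw [hd, htgt, ← hsrc]
      simp [disp]
      ring

lemma disp_map_proj (π : List (Edge D (Q × ℤ))) : disp (π.map proj) = disp π := by
  funext i
  simp [disp, proj, Function.comp_def]

/-- If the index `k` is not orthogonal to `G` (some simple cycle of `G` has nonzero
displacement in coordinate `k`), then building the `k`-th coordinate into the states
strictly decreases the geometric dimension: `dim_ℚ V_{G^{-k}} < dim_ℚ V_G`. -/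
theorem reduce_dim_drop (D : ℕ) (Q : Type) [DecidableEq Q] (G : VASS D Q) (k : Fin D)
    (hk : ∃ (p : Q) (o : List (Edge D Q)), IsSimpleCycle G p o ∧ disp o k ≠ 0)
    (U : ℕ) :
    Module.finrank ℚ ↥(spanV (reduce G k U)) < Module.finrank ℚ ↥(spanV G) := by
  classical
  obtain ⟨p₀, o, hso, hok⟩ := hk
  set W : Submodule ℚ (Fin D → ℚ) :=
    spanV G ⊓ LinearMap.ker (LinearMap.proj (R := ℚ) (φ := fun _ : Fin D => ℚ) k) with hW
  have hle : spanV (reduce G k U) ≤ W := by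
    rw [spanV, Submodule.span_le]
    rintro v ⟨s, π, ⟨hne, hpath, hnd⟩, rfl⟩
    obtain ⟨hp, hd⟩ := reduce_path π s s hpath
    have hdk : disp π k = 0 := by omega
    refine Submodule.mem_inf.2 ⟨?_, ?_⟩
    · have h := cycle_mem (G := G) (π.map proj).length (π.map proj) s.1 rfl hp
      rw [disp_map_proj] at h
      exact h
    · simp only [LinearMap.mem_ker, LinearMap.proj_apply, hdk, Int.cast_zero]
  have hv : (fun i => ((disp o i : ℤ) : ℚ)) ∈ spanV G :=
    Submodule.subset_span ⟨p₀, o, hso, rfl⟩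
  have hvW : (fun i => ((disp o i : ℤ) : ℚ)) ∉ W := by
    intro h
    have h2 : ((disp o k : ℤ) : ℚ) = 0 := (Submodule.mem_inf.1 h).2
    exact hok (by exact_mod_cast h2)
  have hlt : W < spanV G := by
    refine lt_of_le_of_ne inf_le_left (fun h => hvW ?_)
    rw [h]; exact hv
  calc Module.finrank ℚ ↥(spanV (reduce G k U)) ≤ Module.finrank ℚ ↥W :=
        Submodule.finrank_mono hle
    _ < Module.finrank ℚ ↥(spanV G) := Submodule.finrank_lt_finrank_of_lt hlt
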